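/- Let M be a finitely generated ℤ-module and {x_a}_{a∈A} a subset of M. Then {x_a}_{a∈A} is a spanning set (respectively, a basis) of M if and only if for every field F the set {1_F ⊗ x_a}_{a∈A} is a spanning set (respectively, a basis) of the F-vector space F ⊗_ℤ M. -/

import Mathlib

/-!
If the `x a` do not span `M`, their span lies in a maximal submodule `N`, and `M ⧸ N ≅ ℤ ⧸ m`
for a maximal ideal `m`. With `K = ℤ ⧸ m`, the map `K ⊗ M → K` induced by `M → M ⧸ N` is onto,
yet it kills every `1 ⊗ x a`, so these cannot span `K ⊗ M`. Linear independence descends from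
`ℚ ⊗ M` because `ℤ → ℚ` is injective, and bases base-change to bases.
-/

open TensorProduct

universe u

theorem Submodule.exists_isMaximal_surjective_le_ker {R M : Type*} [CommRing R] [AddCommGroup M]
    [Module R M] [Module.Finite R M] {N : Submodule R M} (hN : N ≠ ⊤) :
    ∃ (m : Ideal R) (_ : m.IsMaximal) (f : M →ₗ[R] R ⧸ m),
      Function.Surjective f ∧ N ≤ LinearMap.ker f := by
  obtain ⟨N', hN', hle⟩ := (eq_top_or_exists_le_coatom N).resolve_left hN
  have : IsSimpleModule R (M ⧸ N') := isSimpleModule_iff_isCoatom.mpr hN'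
  obtain ⟨m, hm, ⟨e⟩⟩ := isSimpleModule_iff_quot_maximal.mp this
  refine ⟨m, hm, e.toLinearMap ∘ₗ N'.mkQ, e.surjective.comp N'.mkQ_surjective, ?_⟩
  rwa [LinearEquiv.ker_comp, Submodule.ker_mkQ]

theorem Submodule.span_range_one_tmul_eq_top {R A M ι : Type*} [CommSemiring R] [Semiring A]
    [Algebra R A] [AddCommMonoid M] [Module R M] {x : ι → M}
    (hx : span R (Set.range x) = ⊤) :
    span A (Set.range fun i => (1 : A) ⊗ₜ[R] x i) = ⊤ := by
  have := congrArg (baseChange A) hx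
  rwa [baseChange_span, baseChange_top, ← Set.range_comp] at this

theorem Submodule.span_range_eq_top_of_forall_field {R : Type u} {M ι : Type*} [CommRing R]
    [AddCommGroup M] [Module R M] [Module.Finite R M] {x : ι → M}
    (hx : ∀ (K : Type u) [Field K] [Algebra R K],
      span K (Set.range fun i => (1 : K) ⊗ₜ[R] x i) = ⊤) :
    span R (Set.range x) = ⊤ := by
  by_contra hne
  obtain ⟨m, hm, f, hf, hle⟩ := exists_isMaximal_surjective_le_ker hne
  let := Ideal.Quotient.field m
  let g : (R ⧸ m) ⊗[R] M →ₗ[R ⧸ m] R ⧸ m := f.liftBaseChange (R ⧸ m)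
  have hg : g = 0 := by
    refine LinearMap.ext_on_range (hx (R ⧸ m)) fun i => ?_
    simpa [g] using hle (subset_span ⟨i, rfl⟩)
  obtain ⟨y, hy⟩ := hf 1
  have : g (1 ⊗ₜ y) = 1 := by simpa [g] using hy
  simp [hg] at this

theorem LinearIndependent.of_one_tmul {R A M ι : Type*} [CommRing R] [CommRing A]
    [Algebra R A] [FaithfulSMul R A] [AddCommGroup M] [Module R M] {x : ι → M}
    (hx : LinearIndependent A fun i => (1 : A) ⊗ₜ[R] x i) : LinearIndependent R x :=
  (hx.restrict_scalars' R).of_comp (TensorProduct.mk R A M 1)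

/-- Let `M` be a finitely generated `ℤ`-module and `{x_a}_{a ∈ A}` a
subset of `M`.  Then `{x_a}` is a spanning set (resp. a basis) of `M` if and only if for
every field `F` the set `{1_F ⊗ x_a}` is a spanning set (resp. a basis) of `F ⊗_ℤ M`. -/
theorem stmt_0 (M : Type) [AddCommGroup M] [Module ℤ M] [Module.Finite ℤ M]
    {A : Type} (x : A → M) :
    (Submodule.span ℤ (Set.range x) = ⊤ ↔
      ∀ (F : Type) [Field F],
        Submodule.span F (Set.range fun a => (1 : F) ⊗ₜ[ℤ] x a) = ⊤) ∧
    ((LinearIndependent ℤ x ∧ Submodule.span ℤ (Set.range x) = ⊤) ↔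
      ∀ (F : Type) [Field F],
        LinearIndependent F (fun a => (1 : F) ⊗ₜ[ℤ] x a) ∧
        Submodule.span F (Set.range fun a => (1 : F) ⊗ₜ[ℤ] x a) = ⊤) := by
  have span_iff : Submodule.span ℤ (Set.range x) = ⊤ ↔ ∀ (F : Type) [Field F],
      Submodule.span F (Set.range fun a => (1 : F) ⊗ₜ[ℤ] x a) = ⊤ := by
    refine ⟨fun hx F _ => Submodule.span_range_one_tmul_eq_top hx, fun h => ?_⟩
    refine Submodule.span_range_eq_top_of_forall_field fun K _ _ => ?_
    obtain rfl := Subsingleton.elim ‹Algebra ℤ K› (Ring.toIntAlgebra K)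
    exact h K
  refine ⟨span_iff, fun ⟨hli, hsp⟩ F _ => ?_,
    fun h => ⟨(h ℚ).1.of_one_tmul, span_iff.2 fun F _ => (h F).2⟩⟩
  let b := (Module.Basis.mk hli hsp.ge).baseChange F
  have hb : ⇑b = fun a => (1 : F) ⊗ₜ[ℤ] x a := by
    ext a
    simp [b]
  exact hb ▸ ⟨b.linearIndependent, b.span_eq⟩
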